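/- arXiv:2307.16390 — 11 statements merged into one kernel-verified Lean document; each statement's English description precedes it below -/
import Mathlib

section
/- For 0 < q < 1/2 and p = 1 - q, we have p·h(q²) > q·h(p²), where h is the binary entropy function. -/
/-!
Put `G z = (1 + z) log (1 + z) + (1 - z) log (1 - z)`. Expanding `log (1 - q²) = log p + log (1 + q)`
and `log (1 - p²) = log q + log (1 + p)` gives `p h(q²) - q h(p²) = q² G(p) - p² G(q)`, so since
`q < p` it suffices that `G z / z²` is strictly increasing on `(0, 1)`. Its derivative has the sign
of `z G'(z) - 2 G(z)`, which vanishes at `0` and whose derivative `2z / (1 - z²) - G'(z)` is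
positive: termwise, `G'(z) = log ((1 + z) / (1 - z)) = 2 ∑ z^(2k+1) / (2k+1)` is dominated by
`2 ∑ z^(2k+1) = 2z / (1 - z²)`.
-/

noncomputable def binH (x : ℝ) : ℝ := -x * Real.log x - (1 - x) * Real.log (1 - x)

open Real Set

noncomputable def symmXLogX (z : ℝ) : ℝ :=
  (1 + z) * log (1 + z) + (1 - z) * log (1 - z)

lemma strictMonoOn_of_hasDerivAt_pos {D : Set ℝ} (hD : Convex ℝ D) {f f' : ℝ → ℝ}
    (hf : ∀ x ∈ D, HasDerivAt f (f' x) x) (hf'₀ : ∀ x ∈ interior D, 0 < f' x) :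
    StrictMonoOn f D :=
  strictMonoOn_of_hasDerivWithinAt_pos hD
    (fun x hx => (hf x hx).continuousAt.continuousWithinAt)
    (fun x hx => (hf x (interior_subset hx)).hasDerivWithinAt) hf'₀

lemma hasDerivAt_symmXLogX {z : ℝ} (h₁ : -1 < z) (h₂ : z < 1) :
    HasDerivAt symmXLogX (log (1 + z) - log (1 - z)) z := by
  have hp := (hasDerivAt_mul_log (x := 1 + z) (by linarith)).comp z
    ((hasDerivAt_id z).const_add 1)
  have hm := (hasDerivAt_mul_log (x := 1 - z) (by linarith)).comp z
    ((hasDerivAt_id z).const_sub 1)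
  exact (hp.add hm).congr_deriv (by ring)

lemma hasDerivAt_log_one_add_sub_log_one_sub {z : ℝ} (h₁ : -1 < z) (h₂ : z < 1) :
    HasDerivAt (fun z => log (1 + z) - log (1 - z)) (2 / (1 - z ^ 2)) z := by
  have hp := ((hasDerivAt_id z).const_add 1).log (by simp; linarith)
  have hm := ((hasDerivAt_id z).const_sub 1).log (by simp; linarith)
  refine (hp.sub hm).congr_deriv ?_
  have : (1 : ℝ) + z ≠ 0 := by linarith
  have : (1 : ℝ) - z ≠ 0 := by linarith
  rw [show (1 : ℝ) - z ^ 2 = (1 + z) * (1 - z) by ring]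
  simp only [id]
  field_simp
  ring

lemma log_one_add_sub_log_one_sub_lt {z : ℝ} (h₀ : 0 < z) (h₁ : z < 1) :
    log (1 + z) - log (1 - z) < 2 * z / (1 - z ^ 2) := by
  have hz2 : z ^ 2 < 1 := by nlinarith
  have hgeom : HasSum (fun k : ℕ => 2 * z ^ (2 * k + 1)) (2 * z / (1 - z ^ 2)) := by
    have hterm : (fun k : ℕ => 2 * z ^ (2 * k + 1)) = fun k => 2 * z * (z ^ 2) ^ k := by
      funext k
      ring
    rw [hterm, div_eq_mul_inv]
    exact (hasSum_geometric_of_lt_one (sq_nonneg z) hz2).mul_left (2 * z)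
  refine hasSum_lt (i := 1) (fun k => ?_) ?_
    (hasSum_log_sub_log_of_abs_lt_one (abs_lt.2 ⟨by linarith, h₁⟩)) hgeom
  · have hk : (1 : ℝ) / (2 * k + 1) ≤ 1 := by
      rw [div_le_one (by positivity)]
      linarith [k.cast_nonneg (α := ℝ)]
    have : 0 < z ^ (2 * k + 1) := by positivity
    nlinarith
  · norm_num
    linarith [pow_pos h₀ 3]

lemma two_mul_symmXLogX_lt {z : ℝ} (h₀ : 0 < z) (h₁ : z < 1) :
    2 * symmXLogX z < z * (log (1 + z) - log (1 - z)) := by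
  have hmono : StrictMonoOn (fun x => x * (log (1 + x) - log (1 - x)) - 2 * symmXLogX x)
      (Ico 0 1) := by
    refine strictMonoOn_of_hasDerivAt_pos (convex_Ico 0 1)
      (f' := fun x => 2 * x / (1 - x ^ 2) - (log (1 + x) - log (1 - x))) (fun x hx => ?_)
      (fun x hx => ?_)
    · have h₁ : -1 < x := by linarith [hx.1]
      refine (((hasDerivAt_id x).mul (hasDerivAt_log_one_add_sub_log_one_sub h₁ hx.2)).sub
        ((hasDerivAt_symmXLogX h₁ hx.2).const_mul 2)).congr_deriv ?_
      simp only [id]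
      ring
    · rw [interior_Ico] at hx
      exact sub_pos.2 (log_one_add_sub_log_one_sub_lt hx.1 hx.2)
  have hzero : symmXLogX 0 = 0 := by simp [symmXLogX]
  simpa [hzero] using hmono ⟨le_rfl, one_pos⟩ ⟨h₀.le, h₁⟩ h₀

lemma strictMonoOn_symmXLogX_div_sq : StrictMonoOn (fun z => symmXLogX z / z ^ 2) (Ioo 0 1) := by
  refine strictMonoOn_of_hasDerivAt_pos (convex_Ioo 0 1)
    (f' := fun z => z * (z * (log (1 + z) - log (1 - z)) - 2 * symmXLogX z) / z ^ 4)
    (fun z hz => ?_) (fun z hz => ?_)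
  · refine ((hasDerivAt_symmXLogX (by linarith [hz.1]) hz.2).div (hasDerivAt_pow 2 z)
      (pow_ne_zero 2 hz.1.ne')).congr_deriv ?_
    ring
  · rw [interior_Ioo] at hz
    exact div_pos (mul_pos hz.1 (sub_pos.2 (two_mul_symmXLogX_lt hz.1 hz.2))) (pow_pos hz.1 4)

lemma mul_binH_sq_sub_mul_binH_sq {q : ℝ} (h₀ : 0 < q) (h₁ : q < 1) :
    (1 - q) * binH (q ^ 2) - q * binH ((1 - q) ^ 2)
      = q ^ 2 * symmXLogX (1 - q) - (1 - q) ^ 2 * symmXLogX q := by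
  rw [binH, binH, symmXLogX, symmXLogX, show (1 : ℝ) - (1 - q) = q by ring,
    show (1 : ℝ) - q ^ 2 = (1 - q) * (1 + q) by ring,
    show (1 : ℝ) - (1 - q) ^ 2 = q * (1 + (1 - q)) by ring,
    log_mul (by linarith) (by linarith), log_mul (by linarith) (by linarith), log_pow, log_pow]
  push_cast
  ring

theorem stmt0 (q p : ℝ) (hq : 0 < q) (hq2 : q < 1/2) (hp : p = 1 - q) :
    p * binH (q^2) > q * binH (p^2) := by
  subst hp
  have hq1 : q < 1 := by linarith
  have key := strictMonoOn_symmXLogX_div_sq ⟨hq, hq1⟩ ⟨by linarith, by linarith⟩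
    (by linarith : q < 1 - q)
  rw [div_lt_div_iff₀ (by positivity) (by positivity)] at key
  linarith [mul_binH_sq_sub_mul_binH_sq hq hq1]
end

section
/- The function β(x) = (x-2)·log(1-x) - (x+2)·log(1+x) is strictly positive on (0,1). -/
/-!
Writing `β(x) = -2 log (1 - x²) - x (log (1 + x) - log (1 - x))` and expanding both logarithms
in power series gives `β(x) = ∑_{n ≥ 1} 2 n x^(2n+2) / ((n + 1) (2n + 1))`, a series of
nonnegative terms whose `n = 1` term `x⁴ / 3` is positive.
-/

open Real

theorem Real.hasSum_pow_even_div_log_one_sub_sq {x : ℝ} (h : |x| < 1) :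
    HasSum (fun n : ℕ => x ^ (2 * n + 2) / (n + 1)) (-log (1 - x ^ 2)) := by
  have hx2 : |x ^ 2| < 1 := by
    rw [abs_pow]
    exact pow_lt_one₀ (abs_nonneg x) h two_ne_zero
  refine (hasSum_pow_div_log_of_abs_lt_one hx2).congr_fun fun n => ?_
  ring

theorem Real.hasSum_mul_log_sub_log {x : ℝ} (h : |x| < 1) :
    HasSum (fun n : ℕ => 2 * x ^ (2 * n + 2) / (2 * n + 1))
      (x * (log (1 + x) - log (1 - x))) := by
  refine ((hasSum_log_sub_log_of_abs_lt_one h).mul_left x).congr_fun fun n => ?_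
  ring

theorem Real.hasSum_sub_mul_log_one_sub_sub_add_mul_log_one_add {x : ℝ} (h : |x| < 1) :
    HasSum (fun n : ℕ => 2 * x ^ (2 * n + 2) * (1 / (n + 1) - 1 / (2 * n + 1)))
      ((x - 2) * log (1 - x) - (x + 2) * log (1 + x)) := by
  obtain ⟨hx₁, hx₂⟩ := abs_lt.mp h
  have hlog : log (1 - x ^ 2) = log (1 - x) + log (1 + x) := by
    rw [← log_mul (by linarith) (by linarith)]
    ring_nf
  have hβ : (x - 2) * log (1 - x) - (x + 2) * log (1 + x) =
      2 * -log (1 - x ^ 2) - x * (log (1 + x) - log (1 - x)) := by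
    rw [hlog]
    ring
  rw [hβ]
  refine (((hasSum_pow_even_div_log_one_sub_sq h).mul_left 2).sub
    (hasSum_mul_log_sub_log h)).congr_fun fun n => ?_
  ring

theorem Real.sub_mul_log_one_sub_sub_add_mul_log_one_add_pos {x : ℝ} (hx₀ : x ≠ 0)
    (hx₁ : |x| < 1) : 0 < (x - 2) * log (1 - x) - (x + 2) * log (1 + x) := by
  refine hasSum_lt (f := 0) (i := 1) (fun n => ?_) ?_ hasSum_zero
    (hasSum_sub_mul_log_one_sub_sub_add_mul_log_one_add hx₁)
  · have hcoeff : 1 / ((n : ℝ) + 1) - 1 / (2 * n + 1) = n / ((n + 1) * (2 * n + 1)) := by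
      field_simp
      ring
    have hpow : 0 ≤ x ^ (2 * n + 2) := Even.pow_nonneg ⟨n + 1, by ring⟩ x
    simp only [Pi.zero_apply, hcoeff]
    positivity
  · norm_num
    exact Even.pow_pos (by decide) hx₀

theorem stmt3 (x : ℝ) (hx : x ∈ Set.Ioo (0:ℝ) 1) :
    0 < (x - 2) * Real.log (1 - x) - (x + 2) * Real.log (1 + x) := by
  obtain ⟨hx₀, hx₁⟩ := hx
  exact sub_mul_log_one_sub_sub_add_mul_log_one_add_pos hx₀.ne' (abs_lt.mpr ⟨by linarith, hx₁⟩)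
end

section
/- The function γ(x) = log(1-x) + (x-2)/(x-1) - log(1+x) - (x+2)/(x+1) is strictly positive for x ∈ (0,1). -/
/-!
Since `(x - 2)/(x - 1) - (x + 2)/(x + 1) = 2x/(1 - x²)`, the function is
`g x = log (1 - x) - log (1 + x) + 2x/(1 - x²)`. Its derivative on `(-1, 1)` is
`4x²/(1 - x²)²`, positive on `(0, 1)`, so `g` is strictly increasing on `[0, 1)`
and `g x > g 0 = 0` there.
-/

open Real Set

lemma div_sub_one_sub_div_add_one (x : ℝ) (hx₁ : x - 1 ≠ 0) (hx₂ : x + 1 ≠ 0) :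
    (x - 2) / (x - 1) - (x + 2) / (x + 1) = 2 * x / (1 - x ^ 2) := by
  have hsq : 1 - x ^ 2 ≠ 0 := by
    rw [show 1 - x ^ 2 = -((x - 1) * (x + 1)) by ring]
    exact neg_ne_zero.mpr (mul_ne_zero hx₁ hx₂)
  field_simp
  ring

lemma hasDerivAt_log_one_sub_sub_log_one_add_add {x : ℝ} (hx : x ∈ Ioo (-1 : ℝ) 1) :
    HasDerivAt (fun t => log (1 - t) - log (1 + t) + 2 * t / (1 - t ^ 2))
      (4 * x ^ 2 / (1 - x ^ 2) ^ 2) x := by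
  obtain ⟨hx₁, hx₂⟩ := hx
  have hsub : 1 - x ≠ 0 := by linarith
  have hadd : 1 + x ≠ 0 := by linarith
  have hsq : 1 - x ^ 2 ≠ 0 := by nlinarith
  have hlog_sub := ((hasDerivAt_id x).const_sub 1).log hsub
  have hlog_add := ((hasDerivAt_id x).const_add 1).log hadd
  have hfrac := ((hasDerivAt_id x).const_mul 2).div ((hasDerivAt_pow 2 x).const_sub 1) hsq
  refine ((hlog_sub.sub hlog_add).add hfrac).congr_deriv ?_
  simp only [id]
  field_simp
  ring

lemma strictMonoOn_log_one_sub_sub_log_one_add_add :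
    StrictMonoOn (fun t => log (1 - t) - log (1 + t) + 2 * t / (1 - t ^ 2)) (Ico 0 1) := by
  have hderiv {x : ℝ} (hx : x ∈ Ico (0 : ℝ) 1) :=
    hasDerivAt_log_one_sub_sub_log_one_add_add ⟨by linarith [hx.1], hx.2⟩
  refine strictMonoOn_of_deriv_pos (convex_Ico 0 1)
    (fun x hx => (hderiv hx).continuousAt.continuousWithinAt) fun x hx => ?_
  rw [interior_Ico] at hx
  rw [(hderiv (Ioo_subset_Ico_self hx)).deriv]
  have hsq : 0 < 1 - x ^ 2 := by nlinarith [hx.1, hx.2]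
  exact div_pos (by nlinarith [hx.1]) (pow_pos hsq 2)

theorem stmt4 (x : ℝ) (hx : x ∈ Set.Ioo (0:ℝ) 1) :
    0 < Real.log (1 - x) + (x - 2) / (x - 1) - Real.log (1 + x) - (x + 2) / (x + 1) := by
  have hmono := strictMonoOn_log_one_sub_sub_log_one_add_add
    (left_mem_Ico.mpr zero_lt_one) (Ioo_subset_Ico_self hx) hx.1
  have hrat := div_sub_one_sub_div_add_one x (by linarith [hx.2]) (by linarith [hx.1])
  simp only [sub_zero, add_zero, log_one, zero_pow two_ne_zero, mul_zero, zero_div] at hmono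
  linarith
end

section
/- For 0 < p < 1, h(p²) < 2p·h(p), where h is the binary entropy function. -/
open Real

theorem mul_log_one_sub_add_mul_log_one_add_pos {t : ℝ} (ht : t ≠ 0) (h1 : |t| ≤ 1) :
    0 < (1 - t) * log (1 - t) + (1 + t) * log (1 + t) := by
  obtain ⟨hlow, hup⟩ := abs_le.mp h1
  have hsub := self_sub_one_lt_mul_log (x := 1 - t) (by linarith) (by contrapose! ht; linarith)
  have hadd := self_sub_one_lt_mul_log (x := 1 + t) (by linarith) (by contrapose! ht; linarith)
  linarith

theorem two_mul_binH_sub_binH_sq {p : ℝ} (hp : p ≠ 1) (hp' : p ≠ -1) :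
    2 * p * binH p - binH (p ^ 2) =
      (1 - p) * ((1 - p) * log (1 - p) + (1 + p) * log (1 + p)) := by
  have hsq : 1 - p ^ 2 = (1 - p) * (1 + p) := by ring
  rw [binH, binH, log_pow, hsq,
    log_mul (sub_ne_zero.mpr hp.symm) (by contrapose! hp'; linarith)]
  push_cast
  ring

theorem stmt5 (p : ℝ) (hp : 0 < p) (hp1 : p < 1) :
    binH (p^2) < 2 * p * binH p := by
  have hpos := mul_pos (sub_pos.mpr hp1)
    (mul_log_one_sub_add_mul_log_one_add_pos hp.ne' (abs_le.mpr ⟨by linarith, hp1.le⟩))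
  rw [← two_mul_binH_sub_binH_sq hp1.ne (by linarith)] at hpos
  linarith
end

section
/- For 0 < q < 1/2 and p = 1 - q, we have h(q²) + h(p²) < 2·h(q), where h is the binary entropy function. -/
lemma aux_sum_two (a b : ℝ) (ha : 0 < a) (hb : 0 < b) (hne : a ≠ b) (hab : a + b = 2) :
    0 < a * Real.log a + b * Real.log b := by
  have h := Real.strictConvexOn_mul_log.2 (Set.mem_Ici.2 ha.le) (Set.mem_Ici.2 hb.le) hne
    (by norm_num : (0:ℝ) < 1/2) (by norm_num : (0:ℝ) < 1/2) (by norm_num)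
  simp only [smul_eq_mul] at h
  have : (1/2:ℝ) * a + (1/2) * b = 1 := by linarith
  rw [this] at h
  simp [Real.log_one] at h
  linarith

theorem stmt7 (q p : ℝ) (hq : 0 < q) (hq2 : q < 1/2) (hp : p = 1 - q) :
    binH (q^2) + binH (p^2) < 2 * binH q := by
  subst hp
  have h1q : 0 < 1 - q := by linarith
  have h1pq : 0 < 1 + q := by linarith
  have h2q : 0 < 2 - q := by linarith
  have lq2 : Real.log (q^2) = 2 * Real.log q := by
    rw [Real.log_pow]; push_cast; ring
  have lp2 : Real.log ((1-q)^2) = 2 * Real.log (1-q) := by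
    rw [Real.log_pow]; push_cast; ring
  have l1q2 : Real.log (1 - q^2) = Real.log (1-q) + Real.log (1+q) := by
    rw [show (1:ℝ) - q^2 = (1-q)*(1+q) by ring, Real.log_mul h1q.ne' h1pq.ne']
  have l1p2 : Real.log (1 - (1-q)^2) = Real.log q + Real.log (2-q) := by
    rw [show (1:ℝ) - (1-q)^2 = q*(2-q) by ring, Real.log_mul hq.ne' h2q.ne']
  have hG : 0 < q * Real.log q + (2-q) * Real.log (2-q) :=
    aux_sum_two q (2-q) hq h2q (by linarith) (by ring)
  have hK : 0 < (1-q) * Real.log (1-q) + (1+q) * Real.log (1+q) :=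
    aux_sum_two (1-q) (1+q) h1q h1pq (by linarith) (by ring)
  have key : 2 * binH q - (binH (q^2) + binH ((1-q)^2)) =
      q * (q * Real.log q + (2-q) * Real.log (2-q)) +
      (1-q) * ((1-q) * Real.log (1-q) + (1+q) * Real.log (1+q)) := by
    unfold binH
    rw [lq2, lp2, l1q2, l1p2]
    ring
  nlinarith [mul_pos hq hG, mul_pos h1q hK]
end

section
/- The function g(x) = ((2x-1)/x²)·log(1-x) is strictly decreasing on (0,1). -/
/-! `g'(x) = (2(1-x)² log(1-x) - x(2x-1)) / (x³(1-x))`, whose denominator is positive on `(0,1)`.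
Since `log(1-x) ≤ -x`, the numerator is at most `-x((1-x)² + x²) < 0`. -/

open Real Set

lemma hasDerivAt_div_sq_mul_log_one_sub {x : ℝ} (hx0 : x ≠ 0) (hx1 : x ≠ 1) :
    HasDerivAt (fun x : ℝ => ((2*x - 1) / x^2) * log (1 - x))
      ((2*(1-x)^2 * log (1-x) - x*(2*x-1)) / (x^3*(1-x))) x := by
  have h1x : 1 - x ≠ 0 := sub_ne_zero.mpr hx1.symm
  have hquot : HasDerivAt (fun x : ℝ => (2*x - 1) / x^2)
      ((2 * x^2 - (2*x-1)*(2*x)) / (x^2)^2) x := by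
    have hnum : HasDerivAt (fun x : ℝ => 2*x - 1) 2 x := by
      simpa using ((hasDerivAt_id x).const_mul 2).sub_const 1
    have hden : HasDerivAt (fun x : ℝ => x^2) (2*x) x := by
      simpa using hasDerivAt_pow 2 x
    exact hnum.div hden (pow_ne_zero 2 hx0)
  have hlog : HasDerivAt (fun x : ℝ => log (1 - x)) ((1-x)⁻¹ * (-1)) x :=
    (hasDerivAt_log h1x).comp x (by simpa using (hasDerivAt_id x).const_sub 1)
  refine (hquot.mul hlog).congr_deriv ?_
  field_simp
  ring

lemma two_mul_sq_mul_log_one_sub_lt {x : ℝ} (hx0 : 0 < x) (hx1 : x < 1) :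
    2*(1-x)^2 * log (1-x) < x*(2*x-1) := by
  have hlog : log (1 - x) ≤ -x := by
    linarith [log_le_sub_one_of_pos (sub_pos.mpr hx1)]
  calc 2*(1-x)^2 * log (1-x) ≤ 2*(1-x)^2 * (-x) := by gcongr
    _ = x*(2*x-1) - x*((1-x)^2 + x^2) := by ring
    _ < x*(2*x-1) := by
      have : 0 < x*((1-x)^2 + x^2) := by positivity
      linarith

theorem stmt10 :
    StrictAntiOn (fun x : ℝ => ((2*x - 1) / x^2) * Real.log (1 - x)) (Set.Ioo 0 1) := by
  have hderiv {x : ℝ} (hx : x ∈ Ioo 0 1) := hasDerivAt_div_sq_mul_log_one_sub hx.1.ne' hx.2.ne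
  refine strictAntiOn_of_hasDerivWithinAt_neg (convex_Ioo 0 1)
    (fun x hx => (hderiv hx).continuousAt.continuousWithinAt)
    (fun x hx => (hderiv (interior_subset hx)).hasDerivWithinAt) ?_
  rw [interior_Ioo]
  rintro x ⟨hx0, hx1⟩
  have hden : 0 < x^3*(1-x) := mul_pos (pow_pos hx0 3) (sub_pos.mpr hx1)
  exact div_neg_of_neg_of_pos (sub_neg.mpr (two_mul_sq_mul_log_one_sub_lt hx0 hx1)) hden
end

section
/- For 0 < x < y < 1, we have (g(x) - g(y))/(x - y) + g(x) + g(y) < 0, where g(x) = ((2x-1)/x²)·log(1-x). -/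
/-!
Write `a = g x`, `b = g y`; since `x < y`, the claim is `(y - x) (a + b) < a - b`, and `a > b`
because `g` is decreasing. If `b ≤ 0` this is immediate from `y - x < 1`. If `b > 0`, then
`y < 1/2` (as `g ≤ g (1/2) = 0` on `[1/2, 1)`), and convexity on `(0, 1/2]` together with
`g (1/2) = 0` gives `(1/2 - x) b ≤ (1/2 - y) a`, which reduces the claim to
`(u - v) (1 - u - v) > 0` for `u = 1/2 - x > v = 1/2 - y`.
For the concrete `g`, monotonicity and convexity come from the signs of `g'` and `g''`, each
obtained from `log (1 - x) ≤ -x`.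
-/

noncomputable def gfun (x : ℝ) : ℝ := ((2*x - 1) / x^2) * Real.log (1 - x)

open Set

section Abstract

variable {f : ℝ → ℝ} {x y : ℝ}

lemma mul_add_lt_sub_of_strictAntiOn_of_convexOn (hanti : StrictAntiOn f (Ioo 0 1))
    (hconv : ConvexOn ℝ (Ioc 0 (1 / 2)) f) (hhalf : f (1 / 2) = 0)
    (hx : 0 < x) (hxy : x < y) (hy : y < 1) :
    (y - x) * (f x + f y) < f x - f y := by
  have hfxy : f y < f x := hanti ⟨hx, hxy.trans hy⟩ ⟨hx.trans hxy, hy⟩ hxy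
  rcases le_or_gt (f y) 0 with hfy | hfy
  · nlinarith
  have hy_half : y < 1 / 2 := by
    by_contra! h
    have : f y ≤ f (1 / 2) :=
      hanti.antitoneOn ⟨by norm_num, by norm_num⟩ ⟨by linarith, hy⟩ h
    linarith
  have hsecant : (1 / 2 - x) * f y ≤ (1 / 2 - y) * f x := by
    have := hconv.secant_mono_aux1 ⟨hx, by linarith⟩ ⟨by norm_num, le_rfl⟩ hxy hy_half
    rwa [hhalf, mul_zero, add_zero] at this
  nlinarith [mul_pos (sub_pos.2 hxy) (hfy.trans hfxy)]

theorem slope_add_add_neg_of_strictAntiOn_of_convexOn (hanti : StrictAntiOn f (Ioo 0 1))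
    (hconv : ConvexOn ℝ (Ioc 0 (1 / 2)) f) (hhalf : f (1 / 2) = 0)
    (hx : 0 < x) (hxy : x < y) (hy : y < 1) :
    (f x - f y) / (x - y) + f x + f y < 0 := by
  have key := mul_add_lt_sub_of_strictAntiOn_of_convexOn hanti hconv hhalf hx hxy hy
  have hlt : (f x - f y) / (x - y) < -(f x + f y) := by
    rw [div_lt_iff_of_neg (sub_neg.2 hxy)]
    linarith
  linarith

end Abstract

noncomputable def gfunDeriv (x : ℝ) : ℝ :=
  2 * (1 - x) / x ^ 3 * Real.log (1 - x) - (2 * x - 1) / (x ^ 2 * (1 - x))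

noncomputable def gfunDeriv2 (x : ℝ) : ℝ :=
  (4 * x - 6) * Real.log (1 - x) / x ^ 4 - 2 / x ^ 3
    - (4 * x ^ 2 - 5 * x + 2) / (x ^ 3 * (1 - x) ^ 2)

section Calculus

variable {x : ℝ}

lemma hasDerivAt_log_one_sub (hx : x < 1) :
    HasDerivAt (fun t => Real.log (1 - t)) (-1 / (1 - x)) x := by
  simpa using ((hasDerivAt_id x).const_sub 1).log (by linarith : (1 : ℝ) - x ≠ 0)

lemma hasDerivAt_gfun (hx : 0 < x) (hx1 : x < 1) : HasDerivAt gfun (gfunDeriv x) x := by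
  have : 1 - x ≠ 0 := by linarith
  refine ((((hasDerivAt_id' x).const_mul 2).sub_const 1).fun_div (hasDerivAt_pow 2 x)
    (by positivity)).fun_mul (hasDerivAt_log_one_sub hx1) |>.congr_deriv ?_
  simp only [gfunDeriv]
  field_simp
  ring

lemma hasDerivAt_gfunDeriv (hx : 0 < x) (hx1 : x < 1) : HasDerivAt gfunDeriv (gfunDeriv2 x) x := by
  have : 1 - x ≠ 0 := by linarith
  have h₁ := ((((hasDerivAt_id' x).const_sub 1).const_mul 2).fun_div (hasDerivAt_pow 3 x)
    (by positivity)).fun_mul (hasDerivAt_log_one_sub hx1)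
  have h₂ := (((hasDerivAt_id' x).const_mul 2).sub_const 1).fun_div
    ((hasDerivAt_pow 2 x).fun_mul ((hasDerivAt_id' x).const_sub 1)) (by positivity)
  refine (h₁.fun_sub h₂).congr_deriv ?_
  simp only [gfunDeriv2]
  field_simp
  ring

lemma gfunDeriv_neg (hx : 0 < x) (hx1 : x < 1) : gfunDeriv x < 0 := by
  have hlog : Real.log (1 - x) < -x := by
    linarith [Real.log_lt_sub_one_of_pos (by linarith : 0 < 1 - x) (by linarith : 1 - x ≠ 1)]
  have hnum : 2 * (1 - x) ^ 2 * Real.log (1 - x) - x * (2 * x - 1) < 0 := by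
    nlinarith [sq_nonneg x, mul_pos hx (by linarith : 0 < 1 - x)]
  have heq : gfunDeriv x =
      (2 * (1 - x) ^ 2 * Real.log (1 - x) - x * (2 * x - 1)) / (x ^ 3 * (1 - x)) := by
    have : 1 - x ≠ 0 := by linarith
    unfold gfunDeriv
    field_simp
  rw [heq]
  exact div_neg_of_neg_of_pos hnum (mul_pos (by positivity) (by linarith))

lemma gfunDeriv2_nonneg (hx : 0 < x) (hx1 : x ≤ 1 / 2) : 0 ≤ gfunDeriv2 x := by
  have hlog : (6 - 4 * x) * x ≤ (4 * x - 6) * Real.log (1 - x) := by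
    nlinarith [Real.log_le_sub_one_of_pos (by linarith : 0 < 1 - x)]
  -- after `hlog` the numerator is at least `x (1 - 2x) (2x² - 3x + 2)`
  have hnum : 0 ≤ (4 * x - 6) * Real.log (1 - x) * (1 - x) ^ 2 - 2 * x * (1 - x) ^ 2
      - x * (4 * x ^ 2 - 5 * x + 2) := by
    nlinarith [mul_nonneg (mul_nonneg hx.le (by linarith : (0 : ℝ) ≤ 1 - 2 * x))
      (by nlinarith : (0 : ℝ) ≤ 2 * x ^ 2 - 3 * x + 2), sq_nonneg (1 - x)]
  have heq : gfunDeriv2 x = ((4 * x - 6) * Real.log (1 - x) * (1 - x) ^ 2 - 2 * x * (1 - x) ^ 2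
      - x * (4 * x ^ 2 - 5 * x + 2)) / (x ^ 4 * (1 - x) ^ 2) := by
    have : 1 - x ≠ 0 := by linarith
    unfold gfunDeriv2
    field_simp
  rw [heq]
  positivity

end Calculus

lemma gfun_one_half : gfun (1 / 2) = 0 := by
  norm_num [gfun]

lemma strictAntiOn_gfun : StrictAntiOn gfun (Ioo 0 1) := by
  refine strictAntiOn_of_hasDerivWithinAt_neg (f' := gfunDeriv) (convex_Ioo 0 1)
    (fun t ht => (hasDerivAt_gfun ht.1 ht.2).continuousAt.continuousWithinAt) ?_ ?_ <;>
  rw [interior_Ioo]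
  · exact fun t ht => (hasDerivAt_gfun ht.1 ht.2).hasDerivWithinAt
  · exact fun t ht => gfunDeriv_neg ht.1 ht.2

lemma convexOn_gfun : ConvexOn ℝ (Ioc 0 (1 / 2)) gfun := by
  refine convexOn_of_hasDerivWithinAt2_nonneg (f' := gfunDeriv) (f'' := gfunDeriv2) (convex_Ioc 0 _)
    (fun t ht => (hasDerivAt_gfun ht.1 (by linarith [ht.2])).continuousAt.continuousWithinAt)
    ?_ ?_ ?_ <;> rw [interior_Ioc]
  · exact fun t ht => (hasDerivAt_gfun ht.1 (by linarith [ht.2])).hasDerivWithinAt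
  · exact fun t ht => (hasDerivAt_gfunDeriv ht.1 (by linarith [ht.2])).hasDerivWithinAt
  · exact fun t ht => gfunDeriv2_nonneg ht.1 ht.2.le

theorem stmt13 (x y : ℝ) (hx : 0 < x) (hxy : x < y) (hy : y < 1) :
    (gfun x - gfun y) / (x - y) + gfun x + gfun y < 0 :=
  slope_add_add_neg_of_strictAntiOn_of_convexOn strictAntiOn_gfun convexOn_gfun gfun_one_half
    hx hxy hy
end

section
/- For x, y ∈ (0,1) with x ≠ y, the directional derivative of F(x,y) = (1/(x-y))·((1+y-x)·h(y)/y - (1+x-y)·h(x)/x) along the diagonal direction (1,1) equals (g(x)-g(y))/(x-y) + g(x) + g(y), where g(x) = (h(x) - x·h'(x))/x². -/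
noncomputable def Fdef (x y : ℝ) : ℝ :=
  (1 / (x - y)) * ((1 + y - x) * binH y / y - (1 + x - y) * binH x / x)

noncomputable def gdef (x : ℝ) : ℝ :=
  (binH x - x * (Real.log (1 - x) - Real.log x)) / x^2

/-! Along the diagonal the prefactors `1 / (x - y)`, `1 + y - x`, `1 + x - y` of `F` are constant,
so `t ↦ F (x + t) (y + t)` is a fixed linear combination of the shifted functions `φ (y + t)` and
`φ (x + t)` with `φ v = h v / v`, and `φ' = -g` by the quotient rule. -/

open Real

theorem binH_eq_binEntropy : binH = binEntropy := by
  funext p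
  simp only [binH, binEntropy_eq_negMulLog_add_negMulLog_one_sub, negMulLog]
  ring

theorem hasDerivAt_binH {u : ℝ} (h0 : u ≠ 0) (h1 : u ≠ 1) :
    HasDerivAt binH (log (1 - u) - log u) u :=
  binH_eq_binEntropy ▸ hasDerivAt_binEntropy h0 h1

theorem hasDerivAt_binH_div_self {u : ℝ} (h0 : u ≠ 0) (h1 : u ≠ 1) :
    HasDerivAt (fun v => binH v / v) (-gdef u) u := by
  refine ((hasDerivAt_binH h0 h1).div (hasDerivAt_id u) h0).congr_deriv ?_
  simp only [gdef, id_eq]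
  field_simp
  ring

theorem Fdef_add_add (x y t : ℝ) :
    Fdef (x + t) (y + t) =
      ((1 + y - x) * (binH (y + t) / (y + t)) - (1 + x - y) * (binH (x + t) / (x + t))) / (x - y) := by
  simp only [Fdef, add_sub_add_right_eq_sub, mul_div_assoc]
  ring

theorem stmt14 (x y : ℝ) (hx : x ∈ Set.Ioo (0:ℝ) 1) (hy : y ∈ Set.Ioo (0:ℝ) 1)
    (hxy : x ≠ y) :
    deriv (fun t : ℝ => Fdef (x + t) (y + t)) 0
      = (gdef x - gdef y) / (x - y) + gdef x + gdef y := by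
  have hφ : ∀ u ∈ Set.Ioo (0:ℝ) 1, HasDerivAt (fun t => binH (u + t) / (u + t)) (-gdef u) 0 :=
    fun u hu => HasDerivAt.comp_const_add u 0 <| by
      simpa using hasDerivAt_binH_div_self hu.1.ne' hu.2.ne
  have hF : HasDerivAt (fun t => Fdef (x + t) (y + t))
      (((1 + y - x) * -gdef y - (1 + x - y) * -gdef x) / (x - y)) 0 := by
    simpa only [Fdef_add_add, Pi.sub_apply] using
      (((hφ y hy).const_mul (1 + y - x)).sub ((hφ x hx).const_mul (1 + x - y))).div_const (x - y)
  rw [hF.deriv]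
  field_simp [sub_ne_zero.mpr hxy]
  ring
end

section
/- For x ∈ (0,1/2), α(x) := x·(6x² - 9x + 4) + (6 - 4x)·(1-x)²·log(1-x) < 0. -/
theorem stmt16 (x : ℝ) (hx : x ∈ Set.Ioo (0:ℝ) (1/2)) :
    x * (6*x^2 - 9*x + 4) + (6 - 4*x) * (1 - x)^2 * Real.log (1 - x) < 0 := by
  obtain ⟨h0, h1⟩ := hx
  have hpos : (0:ℝ) < 1 - x := by linarith
  have hne : (1:ℝ) - x ≠ 1 := by intro h; nlinarith
  have hlog : Real.log (1 - x) < (1 - x) - 1 := Real.log_lt_sub_one_of_pos hpos hne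
  have hB : (0:ℝ) < (6 - 4*x) * (1 - x)^2 := by nlinarith [sq_nonneg (1-x)]
  have key : (6 - 4*x) * (1 - x)^2 * Real.log (1 - x) < (6 - 4*x) * (1 - x)^2 * (-x) := by
    apply mul_lt_mul_of_pos_left _ hB
    linarith
  nlinarith [key, mul_pos h0 (mul_pos (by linarith : (0:ℝ) < 1 - 2*x) (by nlinarith : (0:ℝ) < 2*x^2 - 3*x + 2))]
end

section
/- For x ∈ (0,1/2), 2 + 4x + (7 - 6x)·log(1-x) > 0. -/
open Real

lemma neg_div_one_sub_le_log_one_sub {x : ℝ} (hx : x < 1) : -(x / (1 - x)) ≤ log (1 - x) := by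
  have h := one_sub_inv_le_log_of_pos (sub_pos.mpr hx)
  have hne : 1 - x ≠ 0 := (sub_pos.mpr hx).ne'
  rwa [show 1 - (1 - x)⁻¹ = -(x / (1 - x)) by field_simp; ring] at h

lemma two_add_four_mul_sub_mul_div_pos {x : ℝ} (hx : x < 1 / 2) :
    0 < 2 + 4 * x - (7 - 6 * x) * (x / (1 - x)) := by
  have hpos : 0 < 1 - x := by linarith
  have hfactor : 2 + 4 * x - (7 - 6 * x) * (x / (1 - x)) = (2 - x) * (1 - 2 * x) / (1 - x) := by
    field_simp; ring
  rw [hfactor]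
  exact div_pos (mul_pos (by linarith) (by linarith)) hpos

theorem stmt17 (x : ℝ) (hx : x ∈ Set.Ioo (0:ℝ) (1/2)) :
    0 < 2 + 4*x + (7 - 6*x) * Real.log (1 - x) := by
  obtain ⟨-, hx⟩ := hx
  calc 0 < 2 + 4 * x - (7 - 6 * x) * (x / (1 - x)) := two_add_four_mul_sub_mul_div_pos hx
    _ = 2 + 4 * x + (7 - 6 * x) * -(x / (1 - x)) := by ring
    _ ≤ 2 + 4 * x + (7 - 6 * x) * log (1 - x) := by
      gcongr
      · linarith
      · exact neg_div_one_sub_le_log_one_sub (by linarith)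
end

section
/- For 1/2 < x < 1, g'(x) < 0 where g(x) = ((2x-1)/x²)·log(1-x), i.e., the derivative g'(x) = (2(1-x)²·log(1-x) - 2x² + x)/(x³·(1-x)) is negative. -/
theorem stmt19 (x : ℝ) (hx : 1/2 < x) (hx1 : x < 1) :
    (2 * (1 - x)^2 * Real.log (1 - x) - 2*x^2 + x) / (x^3 * (1 - x)) < 0 := by
  have hx0 : 0 < x := by linarith
  have h1 : (0:ℝ) < 1 - x := by linarith
  have hlog : Real.log (1 - x) < 0 := Real.log_neg h1 (by linarith)
  have hsq : (0:ℝ) < 2 * (1 - x)^2 := by positivity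
  have hnum : 2 * (1 - x)^2 * Real.log (1 - x) - 2*x^2 + x < 0 := by
    nlinarith [mul_pos hsq (neg_pos.mpr hlog)]
  have hden : 0 < x^3 * (1 - x) := by positivity
  exact div_neg_of_neg_of_pos hnum hden
end
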